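/- Let K be a field of characteristic zero, R = K[t]/(t²), and M = R/(t) viewed as an R-module. Then the ring R[M] of polynomial laws M → R is isomorphic to the K-vector space spanned by 1, t, tx, tx², tx³, ... inside R[x] (i.e., the subring of R[x] spanned by 1 and by t·x^d for d ≥ 0, with (t x^i)(t x^j) = 0), and R[M] is not a Noetherian ring: the ideal generated by {t, tx, tx², ...} is not finitely generated. -/

import Mathlib

open scoped TensorProduct

universe u

/-- A polynomial law `M → N` over `R`: a family of maps `A ⊗[R] M → A ⊗[R] N`, one for every
commutative `R`-algebra `A`, commuting with base change along all `R`-algebra homomorphisms. -/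
structure PolyLaw (R : Type u) [CommRing R] (M N : Type u)
    [AddCommGroup M] [Module R M] [AddCommGroup N] [Module R N] : Type (u + 1) where
  toFun : ∀ (A : Type u) [CommRing A] [Algebra R A], A ⊗[R] M → A ⊗[R] N
  isCompat : ∀ {A B : Type u} [CommRing A] [Algebra R A] [CommRing B] [Algebra R B]
      (φ : A →ₐ[R] B) (x : A ⊗[R] M),
      LinearMap.rTensor N φ.toLinearMap (toFun A x) = toFun B (LinearMap.rTensor M φ.toLinearMap x)

namespace PolyLaw

variable {R : Type u} [CommRing R] {M N P : Type u}
  [AddCommGroup M] [Module R M] [AddCommGroup N] [Module R N] [AddCommGroup P] [Module R P]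

theorem ext' {f g : PolyLaw R M N}
    (h : ∀ (A : Type u) [CommRing A] [Algebra R A] (x : A ⊗[R] M), f.toFun A x = g.toFun A x) :
    f = g := by
  cases f; cases g
  simp only [mk.injEq]
  funext A instA instB x
  exact h A x

/-- A polynomial law is homogeneous of degree `d` if `φ_A (a • m) = a ^ d • φ_A m` always. -/
def IsHomogeneous (f : PolyLaw R M N) (d : ℕ) : Prop :=
  ∀ (A : Type u) [CommRing A] [Algebra R A] (a : A) (x : A ⊗[R] M),
    f.toFun A (a • x) = a ^ d • f.toFun A x

/-- The polynomial law induced by a linear map. -/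
noncomputable def ofLinear (ψ : M →ₗ[R] N) : PolyLaw R M N where
  toFun A _ _ := LinearMap.lTensor A ψ
  isCompat φ x := by
    show LinearMap.rTensor N φ.toLinearMap (LinearMap.lTensor _ ψ x)
      = LinearMap.lTensor _ ψ (LinearMap.rTensor M φ.toLinearMap x)
    rw [← LinearMap.comp_apply, ← LinearMap.comp_apply,
      LinearMap.rTensor_comp_lTensor, LinearMap.lTensor_comp_rTensor]

/-- Composition of polynomial laws. -/
def comp (g : PolyLaw R N P) (f : PolyLaw R M N) : PolyLaw R M P where
  toFun A _ _ x := g.toFun A (f.toFun A x)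
  isCompat φ x := by rw [g.isCompat φ, f.isCompat φ]

/-- Translation by an element `u : N`, as a polynomial law `N → N`. -/
noncomputable def translation (u : N) : PolyLaw R N N where
  toFun A _ _ x := x + (1 : A) ⊗ₜ[R] u
  isCompat φ x := by
    simp [map_add, LinearMap.rTensor_tmul, map_one]

end PolyLaw

namespace PolyLaw

variable {R : Type u} [CommRing R] {M N : Type u}
  [AddCommGroup M] [Module R M] [AddCommGroup N] [Module R N]

noncomputable instance : Zero (PolyLaw R M N) :=
  ⟨{ toFun := fun A _ _ _ => 0, isCompat := fun φ x => by simp }⟩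

noncomputable instance : Add (PolyLaw R M N) :=
  ⟨fun f g =>
    { toFun := fun A _ _ x => f.toFun A x + g.toFun A x
      isCompat := fun φ x => by simp [map_add, f.isCompat, g.isCompat] }⟩

noncomputable instance : Neg (PolyLaw R M N) :=
  ⟨fun f =>
    { toFun := fun A _ _ x => - f.toFun A x
      isCompat := fun φ x => by simp [map_neg, f.isCompat] }⟩

noncomputable instance : SMul R (PolyLaw R M N) :=
  ⟨fun r f =>
    { toFun := fun A _ _ x => r • f.toFun A x
      isCompat := fun φ x => by simp [map_smul, f.isCompat] }⟩

@[simp] lemma zero_toFun (A : Type u) [CommRing A] [Algebra R A] (x : A ⊗[R] M) :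
    (0 : PolyLaw R M N).toFun A x = 0 := rfl

@[simp] lemma add_toFun (f g : PolyLaw R M N) (A : Type u) [CommRing A] [Algebra R A]
    (x : A ⊗[R] M) : (f + g).toFun A x = f.toFun A x + g.toFun A x := rfl

@[simp] lemma neg_toFun (f : PolyLaw R M N) (A : Type u) [CommRing A] [Algebra R A]
    (x : A ⊗[R] M) : (-f).toFun A x = - f.toFun A x := rfl

@[simp] lemma smul_toFun (r : R) (f : PolyLaw R M N) (A : Type u) [CommRing A] [Algebra R A]
    (x : A ⊗[R] M) : (r • f).toFun A x = r • f.toFun A x := rfl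

noncomputable instance : AddCommGroup (PolyLaw R M N) where
  add_assoc a b c := ext' (by intros; simp [add_assoc])
  zero_add a := ext' (by intros; simp)
  add_zero a := ext' (by intros; simp)
  add_comm a b := ext' (by intros; simp [add_comm])
  neg_add_cancel a := ext' (by intros; simp)
  nsmul := nsmulRec
  zsmul := zsmulRec

noncomputable instance : Module R (PolyLaw R M N) where
  one_smul f := ext' (by intros; simp)
  mul_smul r s f := ext' (by intros; simp [mul_smul])
  smul_zero r := ext' (by intros; simp)
  smul_add r f g := ext' (by intros; simp)
  add_smul r s f := ext' (by intros; simp [add_smul])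
  zero_smul f := ext' (by intros; simp)

lemma rTensor_eq_algMap {A B : Type u} [CommRing A] [Algebra R A] [CommRing B] [Algebra R B]
    (φ : A →ₐ[R] B) (x : A ⊗[R] R) :
    LinearMap.rTensor R φ.toLinearMap x = Algebra.TensorProduct.map φ (AlgHom.id R R) x := by
  induction x using TensorProduct.induction_on with
  | zero => simp
  | tmul a r => simp
  | add x y hx hy => simp [map_add, hx, hy]

noncomputable instance : One (PolyLaw R M R) :=
  ⟨{ toFun := fun A _ _ _ => 1
     isCompat := fun φ x => by rw [rTensor_eq_algMap, map_one] }⟩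

noncomputable instance : Mul (PolyLaw R M R) :=
  ⟨fun f g =>
    { toFun := fun A _ _ x => f.toFun A x * g.toFun A x
      isCompat := fun φ x => by
        rw [rTensor_eq_algMap, map_mul, ← rTensor_eq_algMap, ← rTensor_eq_algMap,
          f.isCompat, g.isCompat] }⟩

@[simp] lemma one_toFun (A : Type u) [CommRing A] [Algebra R A] (x : A ⊗[R] M) :
    (1 : PolyLaw R M R).toFun A x = 1 := rfl

@[simp] lemma mul_toFun (f g : PolyLaw R M R) (A : Type u) [CommRing A] [Algebra R A]
    (x : A ⊗[R] M) : (f * g).toFun A x = f.toFun A x * g.toFun A x := rfl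

noncomputable instance : CommRing (PolyLaw R M R) :=
  { (inferInstance : AddCommGroup (PolyLaw R M R)) with
    mul := (· * ·)
    one := 1
    mul_assoc := fun a b c => ext' (by intros; simp [mul_assoc])
    one_mul := fun a => ext' (by intros; simp)
    mul_one := fun a => ext' (by intros; simp)
    left_distrib := fun a b c => ext' (by intros; simp [mul_add])
    right_distrib := fun a b c => ext' (by intros; simp [add_mul])
    mul_comm := fun a b => ext' (by intros; simp [mul_comm])
    zero_mul := fun a => ext' (by intros; simp)
    mul_zero := fun a => ext' (by intros; simp) }

noncomputable instance : Algebra R (PolyLaw R M R) :=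
  Algebra.ofModule (fun r x y => ext' (by intros; simp [smul_mul_assoc]))
    (fun r x y => ext' (by intros; simp [mul_smul_comm]))

end PolyLaw

open PolyLaw Polynomial

/-!
Evaluation at the generic point `X ⊗ 1` of `R[X] ⊗ R/(t)` embeds `R[M]` into `R[X]`, because
every element of `A ⊗ R/(t)` has the form `a ⊗ 1`. As `(X + t) ⊗ 1 = X ⊗ 1`, the image `p` of a
law satisfies `p(X + t) = p`, i.e. `t p' = 0` since `t² = 0`; as nonzero integers are units and
`ann t = (t)` this puts every coefficient of positive degree in `(t)`. Conversely the laws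
`x ↦ μ(xⁿ)`, with `μ : R/(t) → R` sending `1` to `t`, realise every `t Xⁿ`.
In the image ring, because `(t)² = 0`, an element acts on polynomials with coefficients in `(t)`
through its constant term, so an ideal generated by finitely many such polynomials has bounded
degree and cannot contain every `t Xⁿ`.
-/

theorem Polynomial.aeval_X_add_C_of_mul_self_eq_zero {R : Type*} [CommRing R] {a : R}
    (ha : a * a = 0) (p : R[X]) : aeval (X + C a) p = p + C a * derivative p := by
  rw [aeval_add_of_sq_eq_zero _ _ _ (by rw [sq, ← C_mul, ha, C_0]), aeval_X_left_apply,
    aeval_X_left_apply, mul_comm]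

section TensorQuotient

variable {R : Type u} [CommRing R] (I : Ideal R)

theorem TensorProduct.exists_eq_tmul_one_quotient {A : Type*} [AddCommGroup A] [Module R A]
    (x : A ⊗[R] (R ⧸ I)) : ∃ a : A, x = a ⊗ₜ[R] (1 : R ⧸ I) := by
  induction x using TensorProduct.induction_on with
  | zero => exact ⟨0, by simp⟩
  | tmul a m =>
    obtain ⟨r, rfl⟩ := Ideal.Quotient.mk_surjective m
    refine ⟨r • a, ?_⟩
    rw [TensorProduct.smul_tmul, ← Algebra.algebraMap_eq_smul_one, Ideal.Quotient.algebraMap_eq]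
  | add x y hx hy =>
    obtain ⟨a, rfl⟩ := hx
    obtain ⟨b, rfl⟩ := hy
    exact ⟨a + b, (TensorProduct.add_tmul a b 1).symm⟩

theorem TensorProduct.algebraMap_tmul_one_quotient_eq_zero {A : Type*} [Semiring A] [Algebra R A]
    {r : R} (hr : r ∈ I) : algebraMap R A r ⊗ₜ[R] (1 : R ⧸ I) = 0 := by
  rw [Algebra.algebraMap_eq_smul_one, TensorProduct.smul_tmul, ← Algebra.algebraMap_eq_smul_one,
    Ideal.Quotient.algebraMap_eq, Ideal.Quotient.eq_zero_iff_mem.2 hr, TensorProduct.tmul_zero]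

end TensorQuotient

section TensorAlgHom

variable {R : Type u} [CommRing R] {A B : Type u} [CommRing A] [Algebra R A] [CommRing B]
  [Algebra R B]

theorem LinearMap.rTensor_toLinearMap_eq_map {N : Type u} [CommRing N] [Algebra R N]
    (φ : A →ₐ[R] B) (x : A ⊗[R] N) :
    φ.toLinearMap.rTensor N x = Algebra.TensorProduct.map φ (AlgHom.id R N) x := by
  induction x using TensorProduct.induction_on with
  | zero => simp
  | tmul a r => simp
  | add x y hx hy => simp [hx, hy]

theorem Algebra.TensorProduct.rid_rTensor (φ : A →ₐ[R] B) (y : A ⊗[R] R) :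
    Algebra.TensorProduct.rid R R B (φ.toLinearMap.rTensor R y) =
      φ (Algebra.TensorProduct.rid R R A y) := by
  induction y using TensorProduct.induction_on with
  | zero => simp
  | tmul a r => simp
  | add x y hx hy => simp [hx, hy]

end TensorAlgHom

namespace PolyLaw

variable {R : Type u} [CommRing R]

noncomputable def pow (M : Type u) [CommRing M] [Algebra R M] (n : ℕ) : PolyLaw R M M where
  toFun _ _ _ x := x ^ n
  isCompat φ x := by
    rw [LinearMap.rTensor_toLinearMap_eq_map, map_pow, LinearMap.rTensor_toLinearMap_eq_map]

variable (I : Ideal R)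

noncomputable def toPolynomial : PolyLaw R (R ⧸ I) R →ₐ[R] R[X] where
  toFun f := Algebra.TensorProduct.rid R R R[X] (f.toFun R[X] (X ⊗ₜ 1))
  map_one' := by rw [one_toFun, map_one]
  map_mul' f g := by rw [mul_toFun, map_mul]
  map_zero' := by rw [zero_toFun, map_zero]
  map_add' f g := by rw [add_toFun, map_add]
  commutes' r := by
    change Algebra.TensorProduct.rid R R R[X] (r • 1) = _
    rw [map_smul, map_one, Algebra.algebraMap_eq_smul_one]

variable {I}

theorem rid_toFun_tmul_one (f : PolyLaw R (R ⧸ I) R) {A : Type u} [CommRing A] [Algebra R A]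
    (a : A) :
    Algebra.TensorProduct.rid R R A (f.toFun A (a ⊗ₜ 1)) = aeval a (toPolynomial I f) := by
  have hX : (aeval a).toLinearMap.rTensor (R ⧸ I) (X ⊗ₜ[R] (1 : R ⧸ I)) = a ⊗ₜ 1 := by simp
  rw [← hX, ← f.isCompat, Algebra.TensorProduct.rid_rTensor]
  rfl

theorem toPolynomial_injective : Function.Injective (toPolynomial I) := by
  intro f g hfg
  refine ext' fun A _ _ x => ?_
  obtain ⟨a, rfl⟩ := TensorProduct.exists_eq_tmul_one_quotient I x
  apply (Algebra.TensorProduct.rid R R A).injective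
  rw [rid_toFun_tmul_one, rid_toFun_tmul_one, hfg]

theorem aeval_X_add_C_toPolynomial (f : PolyLaw R (R ⧸ I) R) {r : R} (hr : r ∈ I) :
    aeval (X + C r) (toPolynomial I f) = toPolynomial I f := by
  rw [← rid_toFun_tmul_one, TensorProduct.add_tmul, ← algebraMap_eq,
    TensorProduct.algebraMap_tmul_one_quotient_eq_zero I hr, add_zero]
  rfl

theorem toPolynomial_ofLinear_comp_pow (μ : R ⧸ I →ₗ[R] R) (n : ℕ) :
    toPolynomial I ((ofLinear μ).comp (pow (R ⧸ I) n)) = C (μ 1) * X ^ n := by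
  change Algebra.TensorProduct.rid R R R[X] (μ.lTensor R[X] ((X ⊗ₜ 1) ^ n)) = _
  rw [Algebra.TensorProduct.tmul_pow, one_pow, LinearMap.lTensor_tmul,
    Algebra.TensorProduct.rid_tmul, smul_eq_C_mul]

end PolyLaw

namespace Polynomial

variable {R : Type u} [CommRing R] (t : R)

noncomputable def adjoinCMulXPow : Subalgebra R R[X] :=
  Algebra.adjoin R {p : R[X] | ∃ n : ℕ, 1 ≤ n ∧ p = C t * X ^ n}

variable {t}

theorem mem_adjoinCMulXPow_iff {p : R[X]} :
    p ∈ adjoinCMulXPow t ↔ ∀ n ≠ 0, p.coeff n ∈ Ideal.span {t} := by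
  constructor
  · intro hp
    have hle : adjoinCMulXPow t ≤
        (⊥ : Subalgebra R (R ⧸ Ideal.span {t})[X]).comap
          (mapAlgHom (Ideal.Quotient.mkₐ R (Ideal.span {t}))) := by
      refine Algebra.adjoin_le ?_
      rintro _ ⟨n, -, rfl⟩
      have ht : Ideal.Quotient.mk (Ideal.span {t}) t = 0 :=
        Ideal.Quotient.eq_zero_iff_mem.2 (Ideal.mem_span_singleton_self t)
      simpa [coe_mapAlgHom, ht] using ⟨0, map_zero _⟩
    obtain ⟨r, hr⟩ := Algebra.mem_bot.1 (hle hp)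
    intro n hn
    have := congrArg (coeff · n) hr
    simp only [algebraMap_apply, Ideal.Quotient.algebraMap_eq, coeff_C, hn, if_false,
      mapAlgHom_coe_ringHom, coe_mapRingHom, coeff_map, RingHom.coe_coe,
      Ideal.Quotient.mkₐ_eq_mk] at this
    exact Ideal.Quotient.eq_zero_iff_mem.1 this.symm
  · intro hp
    rw [p.as_sum_range_C_mul_X_pow]
    refine Subalgebra.sum_mem _ fun n _ => ?_
    rcases eq_or_ne n 0 with rfl | hn
    · simpa using Subalgebra.algebraMap_mem (adjoinCMulXPow t) (p.coeff 0)
    · obtain ⟨d, hd⟩ := Ideal.mem_span_singleton.1 (hp n hn)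
      rw [hd, C_mul, mul_comm (C t), mul_assoc]
      exact Subalgebra.mul_mem _ (Subalgebra.algebraMap_mem _ d)
        (Algebra.subset_adjoin ⟨n, Nat.one_le_iff_ne_zero.2 hn, rfl⟩)

theorem mul_eq_C_coeff_zero_mul_of_mem_adjoinCMulXPow (ht : t * t = 0) {p q : R[X]}
    (hp : p ∈ adjoinCMulXPow t) (hq : q ∈ Ideal.map C (Ideal.span {t})) :
    p * q = C (p.coeff 0) * q := by
  have hp' : p - C (p.coeff 0) ∈ Ideal.map C (Ideal.span {t}) := by
    refine Ideal.mem_map_C_iff.2 fun n => ?_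
    rcases eq_or_ne n 0 with rfl | hn
    · simp
    · simpa [coeff_C, hn] using mem_adjoinCMulXPow_iff.1 hp n hn
  have hsq : Ideal.map C (Ideal.span {t}) * Ideal.map C (Ideal.span {t}) = (⊥ : Ideal R[X]) := by
    rw [← Ideal.map_mul, Ideal.span_singleton_mul_span_singleton, ht,
      Ideal.span_singleton_eq_bot.2 rfl, Ideal.map_bot]
  have := hsq ▸ Ideal.mul_mem_mul hp' hq
  rwa [Ideal.mem_bot, sub_mul, sub_eq_zero] at this

theorem natDegree_le_of_mem_span (ht : t * t = 0) {F : Finset (adjoinCMulXPow t)}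
    (hF : ∀ f ∈ F, (f : R[X]) ∈ Ideal.map C (Ideal.span {t})) {x : adjoinCMulXPow t}
    (hx : x ∈ Ideal.span (F : Set (adjoinCMulXPow t))) :
    (x : R[X]) ∈ Ideal.map C (Ideal.span {t}) ∧
      (x : R[X]).natDegree ≤ F.sup fun f => (f : R[X]).natDegree := by
  induction hx using Submodule.span_induction with
  | mem f hf =>
    exact ⟨hF f hf, Finset.le_sup (f := fun f : adjoinCMulXPow t => (f : R[X]).natDegree) hf⟩
  | zero => simp
  | add x y _ _ hx hy =>
    exact ⟨Ideal.add_mem _ hx.1 hy.1, (natDegree_add_le _ _).trans (max_le hx.2 hy.2)⟩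
  | smul s x _ hx =>
    rw [smul_eq_mul, Subalgebra.coe_mul, mul_eq_C_coeff_zero_mul_of_mem_adjoinCMulXPow ht s.2 hx.1]
    exact ⟨Ideal.mul_mem_left _ _ hx.1, (natDegree_C_mul_le _ _).trans hx.2⟩

theorem not_fg_span_C_mul_X_pow (ht : t * t = 0) (ht0 : t ≠ 0) :
    ¬ (Ideal.span {x : adjoinCMulXPow t | ∃ n : ℕ, (x : R[X]) = C t * X ^ n}).FG := by
  rintro ⟨F, hF⟩
  have hgen : Ideal.span {x : adjoinCMulXPow t | ∃ n : ℕ, (x : R[X]) = C t * X ^ n} ≤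
      (Ideal.map C (Ideal.span {t})).comap (adjoinCMulXPow t).val := by
    refine Ideal.span_le.2 ?_
    rintro x ⟨n, hn⟩
    rw [SetLike.mem_coe, Ideal.mem_comap, Subalgebra.coe_val, hn]
    exact Ideal.mul_mem_right _ _ (Ideal.mem_map_of_mem _ (Ideal.mem_span_singleton_self t))
  set N := F.sup fun f => (f : R[X]).natDegree
  have hN : (C t * X ^ (N + 1) : R[X]) ∈ adjoinCMulXPow t :=
    Algebra.subset_adjoin ⟨N + 1, N.succ_pos, rfl⟩
  have hdeg := (natDegree_le_of_mem_span ht (F := F)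
    (fun f hf => hgen (hF ▸ Ideal.subset_span hf)) (x := ⟨_, hN⟩)
    (hF ▸ Ideal.subset_span ⟨N + 1, rfl⟩)).2
  rw [natDegree_C_mul_X_pow _ _ ht0] at hdeg
  omega

end Polynomial

namespace PolyLaw

open Polynomial

variable {R : Type u} [CommRing R] {t : R}

theorem coeff_toPolynomial_mem_span [Algebra ℚ R] (ht : t * t = 0)
    (hann : ∀ c : R, t * c = 0 → c ∈ Ideal.span {t}) (f : PolyLaw R (R ⧸ Ideal.span {t}) R)
    {n : ℕ} (hn : n ≠ 0) : (toPolynomial _ f).coeff n ∈ Ideal.span {t} := by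
  set p := toPolynomial _ f
  have hfix := aeval_X_add_C_toPolynomial f (Ideal.mem_span_singleton_self t)
  rw [aeval_X_add_C_of_mul_self_eq_zero ht, add_eq_left] at hfix
  obtain ⟨m, rfl⟩ := Nat.exists_eq_succ_of_ne_zero hn
  have hcoeff : t * (p.coeff (m + 1) * (m + 1)) = 0 := by
    simpa only [coeff_C_mul, coeff_derivative, coeff_zero] using congrArg (coeff · m) hfix
  have hunit : IsUnit ((m + 1 : ℕ) : R) := by
    simpa only [map_natCast] using
      (Nat.cast_ne_zero.2 m.succ_ne_zero : ((m + 1 : ℕ) : ℚ) ≠ 0).isUnit.map (algebraMap ℚ R)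
  refine hann _ ((hunit.mul_right_eq_zero).1 ?_)
  push_cast
  linear_combination hcoeff

theorem range_toPolynomial [Algebra ℚ R] (ht : t * t = 0)
    (hann : ∀ c : R, t * c = 0 → c ∈ Ideal.span {t}) :
    (toPolynomial (Ideal.span {t})).range = adjoinCMulXPow t := by
  refine le_antisymm ?_ (Algebra.adjoin_le ?_)
  · rintro _ ⟨f, rfl⟩
    exact mem_adjoinCMulXPow_iff.2 fun n hn => coeff_toPolynomial_mem_span ht hann f hn
  · rintro _ ⟨n, -, rfl⟩
    let μ : R ⧸ Ideal.span {t} →ₗ[R] R := (Ideal.span {t}).liftQ (LinearMap.mulLeft R t) <| by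
      rw [Ideal.span, Submodule.span_singleton_le_iff_mem, LinearMap.mem_ker,
        LinearMap.mulLeft_apply, ht]
    refine ⟨(ofLinear μ).comp (pow _ n), (toPolynomial_ofLinear_comp_pow μ n).trans ?_⟩
    congr 2
    exact mul_one t

noncomputable def equivAdjoinCMulXPow [Algebra ℚ R] (ht : t * t = 0)
    (hann : ∀ c : R, t * c = 0 → c ∈ Ideal.span {t}) :
    PolyLaw R (R ⧸ Ideal.span {t}) R ≃ₐ[R] adjoinCMulXPow t :=
  (AlgEquiv.ofInjective _ toPolynomial_injective).trans
    (Subalgebra.equivOfEq _ _ (range_toPolynomial ht hann))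

end PolyLaw

namespace Polynomial

variable {A : Type u} [CommRing A]

theorem mk_X_mul_self_eq_zero :
    Ideal.Quotient.mk (Ideal.span {(X : A[X]) ^ 2}) X * Ideal.Quotient.mk _ X = 0 := by
  rw [← map_mul, ← sq, Ideal.Quotient.eq_zero_iff_mem]
  exact Ideal.mem_span_singleton_self _

theorem mk_X_ne_zero [Nontrivial A] : Ideal.Quotient.mk (Ideal.span {(X : A[X]) ^ 2}) X ≠ 0 := by
  rw [Ne, Ideal.Quotient.eq_zero_iff_mem, Ideal.mem_span_singleton]
  rintro ⟨q, hq⟩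
  simpa [coeff_X_pow_mul'] using congrArg (coeff · 1) hq

theorem mem_span_mk_X_of_mk_X_mul_eq_zero {c : A[X] ⧸ Ideal.span {(X : A[X]) ^ 2}}
    (hc : Ideal.Quotient.mk _ X * c = 0) : c ∈ Ideal.span {Ideal.Quotient.mk _ X} := by
  obtain ⟨q, rfl⟩ := Ideal.Quotient.mk_surjective c
  rw [← map_mul, Ideal.Quotient.eq_zero_iff_mem, Ideal.mem_span_singleton] at hc
  obtain ⟨r, hr⟩ := hc
  rw [sq, mul_assoc] at hr
  rw [isRegular_X.left hr, map_mul]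
  exact Ideal.mul_mem_right _ _ (Ideal.mem_span_singleton_self _)

end Polynomial

set_option synthInstance.maxHeartbeats 2000000 in
set_option maxHeartbeats 2000000 in
theorem coordinate_ring_not_noetherian (K : Type u) [Field K] [CharZero K] :
    letI R := Polynomial K ⧸ Ideal.span {(Polynomial.X : Polynomial K) ^ 2}
    letI t : R := Ideal.Quotient.mk _ Polynomial.X
    letI M := R ⧸ Ideal.span {t}
    letI S : Subalgebra R (Polynomial R) :=
      Algebra.adjoin R {p : Polynomial R | ∃ n : ℕ, 1 ≤ n ∧ p = Polynomial.C t * Polynomial.X ^ n}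
    Nonempty (PolyLaw R M R ≃+* ↥S) ∧
      ¬ IsNoetherianRing (PolyLaw R M R) ∧
      ¬ (Ideal.span {x : ↥S | ∃ n : ℕ,
          (x : Polynomial R) = Polynomial.C t * Polynomial.X ^ n}).FG := by
  have ht := mk_X_mul_self_eq_zero (A := K)
  have hnotFG := not_fg_span_C_mul_X_pow ht mk_X_ne_zero
  let e := (equivAdjoinCMulXPow ht fun _ => mem_span_mk_X_of_mk_X_mul_eq_zero).toRingEquiv
  exact ⟨⟨e⟩, fun _ => hnotFG ((isNoetherianRing_of_ringEquiv _ e).noetherian _), hnotFG⟩
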